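/- arXiv:1905.13121 — 2 statements merged into one kernel-verified Lean document; each statement's English description precedes it below -/
import Mathlib

section
/- Let k ≥ 2 and d ≥ 1, let C be a nonempty subset of (ℝ^d)^k (a confidence set of parameter families φ = (φ^1, …, φ^k)), and let θ̃ = (θ̃^1, …, θ̃^k) ∈ (ℝ^d)^k be policy parameters such that for every pair of arms i, j there exist α > 0 and φ ∈ C with θ̃^i − θ̃^j = α·(φ^i − φ^j). Then for every context s ∈ ℝ^d and every arm j that is excluded at s relative to C, the arm j does not maximize a ↦ ⟨s, θ̃^a⟩; indeed, for the witnessing arm i one has ⟨s, θ̃^i⟩ > ⟨s, θ̃^j⟩. -/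
open Matrix

/-- Theorem 2: a rarely-switching policy whose pairwise parameter differences
lie in the cone of feasible differences `Ψ^{ij} = {φ^i − φ^j : φ ∈ C}` never
plays an excluded arm. Arm `j` is excluded at context `s` (with witnessing arm
`i`) relative to `C` if `⟨s, φ^i − φ^j⟩ > 0` for every `φ ∈ C`; in that case the
policy strictly prefers `i` to `j`, so `j` does not maximize `a ↦ ⟨s, θ̃^a⟩`. -/
theorem cone_feasible_policy_never_plays_excluded_arm
    (d k : ℕ) (hd : 1 ≤ d) (hk : 2 ≤ k)
    (C : Set (Fin k → Fin d → ℝ)) (hC : C.Nonempty)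
    (θt : Fin k → Fin d → ℝ)
    (hcone : ∀ i j : Fin k, ∃ α : ℝ, 0 < α ∧ ∃ φ ∈ C,
      θt i - θt j = α • (φ i - φ j)) :
    ∀ (s : Fin d → ℝ) (i j : Fin k),
      (∀ φ ∈ C, 0 < s ⬝ᵥ (φ i - φ j)) →
        s ⬝ᵥ θt j < s ⬝ᵥ θt i ∧ ¬ (∀ b : Fin k, s ⬝ᵥ θt b ≤ s ⬝ᵥ θt j) := by
  intro s i j hexcl
  obtain ⟨α, hα, φ, hφC, hdiff⟩ := hcone i j
  have key : s ⬝ᵥ θt i - s ⬝ᵥ θt j = α * (s ⬝ᵥ (φ i - φ j)) := by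
    rw [← dotProduct_sub, hdiff, dotProduct_smul, smul_eq_mul]
  have hpos : 0 < s ⬝ᵥ θt i - s ⬝ᵥ θt j := by
    rw [key]; exact mul_pos hα (hexcl φ hφC)
  have hlt : s ⬝ᵥ θt j < s ⬝ᵥ θt i := by linarith
  exact ⟨hlt, fun h => absurd (h i) (not_le.2 hlt)⟩
end

section
/- Let k ≥ 1, d ≥ 1, and for each arm a ∈ {1,…,k} let V^a be a positive definite real d×d matrix, and let θ^a, θ̂^a ∈ ℝ^d and β ≥ 0 satisfy ‖θ^a − θ̂^a‖_{V^a} ≤ √β for all a. Let s ∈ ℝ^d and suppose arm b satisfies the non-exclusion (confidence-interval overlap) condition: for every arm i, ⟨s, θ̂^i⟩ − √β·‖s‖_{(V^i)^{-1}} ≤ ⟨s, θ̂^b⟩ + √β·‖s‖_{(V^b)^{-1}}. Then for every arm a, ⟨s, θ^a⟩ − ⟨s, θ^b⟩ ≤ 2√β·( ‖s‖_{(V^a)^{-1}} + ‖s‖_{(V^b)^{-1}} ) ≤ 4√β · max_c ‖s‖_{(V^c)^{-1}}. -/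
open Matrix Finset

section PosDef

variable {n : Type*} [Fintype n] [DecidableEq n] {W : Matrix n n ℝ}

/-- Cauchy–Schwarz for the inner product `⟪x, y⟫_W = xᵀ W y`, applied to `x` and `W⁻¹ s`. -/
theorem Matrix.PosDef.dotProduct_le_sqrt_mul_sqrt_inv (hW : W.PosDef) (s x : n → ℝ) :
    s ⬝ᵥ x ≤ √(x ⬝ᵥ W *ᵥ x) * √(s ⬝ᵥ W⁻¹ *ᵥ s) := by
  let := W.toSeminormedAddCommGroup hW.posSemidef
  let := W.toInnerProductSpace hW.posSemidef
  have hWs : W *ᵥ (W⁻¹ *ᵥ s) = s := by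
    rw [mulVec_mulVec, mul_nonsing_inv _ (isUnit_iff_ne_zero.mpr hW.det_pos.ne'), one_mulVec]
  have hinner (u v : n → ℝ) : inner ℝ u v = (W *ᵥ v) ⬝ᵥ u := rfl
  have hCS := real_inner_le_norm x (W⁻¹ *ᵥ s)
  rwa [norm_eq_sqrt_real_inner x, norm_eq_sqrt_real_inner (W⁻¹ *ᵥ s), hinner, hinner, hinner,
    hWs, dotProduct_comm (W *ᵥ x)] at hCS

theorem Matrix.PosDef.abs_dotProduct_le_sqrt_mul_sqrt_inv (hW : W.PosDef) (s x : n → ℝ) :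
    |s ⬝ᵥ x| ≤ √(x ⬝ᵥ W *ᵥ x) * √(s ⬝ᵥ W⁻¹ *ᵥ s) := by
  refine abs_le.mpr ⟨?_, hW.dotProduct_le_sqrt_mul_sqrt_inv s x⟩
  have hneg := hW.dotProduct_le_sqrt_mul_sqrt_inv (-s) x
  rw [neg_dotProduct, mulVec_neg, dotProduct_neg, neg_dotProduct, neg_neg] at hneg
  linarith

end PosDef

theorem nonexcluded_arm_instantaneous_regret_bound_general
    (d k : ℕ) (hk : 1 ≤ k)
    (V : Fin k → Matrix (Fin d) (Fin d) ℝ)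
    (hV : ∀ a : Fin k, (V a).PosDef)
    (θ θhat : Fin k → Fin d → ℝ)
    (β : ℝ)
    (hconf : ∀ a : Fin k,
      Real.sqrt ((θ a - θhat a) ⬝ᵥ (V a).mulVec (θ a - θhat a)) ≤ Real.sqrt β)
    (s : Fin d → ℝ) (b : Fin k)
    (hnotexcl : ∀ i : Fin k,
      s ⬝ᵥ θhat i - Real.sqrt β * Real.sqrt (s ⬝ᵥ ((V i)⁻¹).mulVec s) ≤
        s ⬝ᵥ θhat b + Real.sqrt β * Real.sqrt (s ⬝ᵥ ((V b)⁻¹).mulVec s)) :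
    ∀ a : Fin k,
      s ⬝ᵥ θ a - s ⬝ᵥ θ b ≤
          2 * Real.sqrt β *
            (Real.sqrt (s ⬝ᵥ ((V a)⁻¹).mulVec s) +
              Real.sqrt (s ⬝ᵥ ((V b)⁻¹).mulVec s)) ∧
        2 * Real.sqrt β *
            (Real.sqrt (s ⬝ᵥ ((V a)⁻¹).mulVec s) +
              Real.sqrt (s ⬝ᵥ ((V b)⁻¹).mulVec s)) ≤
          4 * Real.sqrt β *
            (Finset.univ.sup' (Finset.univ_nonempty_iff.mpr ⟨⟨0, hk⟩⟩)
              (fun c : Fin k => Real.sqrt (s ⬝ᵥ ((V c)⁻¹).mulVec s))) := by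
  intro a
  set N : Fin k → ℝ := fun c => √(s ⬝ᵥ (V c)⁻¹ *ᵥ s)
  have hdev (c : Fin k) : |s ⬝ᵥ θ c - s ⬝ᵥ θhat c| ≤ √β * N c := by
    rw [← dotProduct_sub]
    exact ((hV c).abs_dotProduct_le_sqrt_mul_sqrt_inv s _).trans
      (mul_le_mul_of_nonneg_right (hconf c) (Real.sqrt_nonneg _))
  have ha := abs_le.mp (hdev a)
  have hb := abs_le.mp (hdev b)
  refine ⟨by linarith [hnotexcl a], ?_⟩
  calc 2 * √β * (N a + N b)
      ≤ 2 * √β * (univ.sup' _ N + univ.sup' _ N) := by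
        gcongr <;> exact le_sup' N (mem_univ _)
    _ = _ := by ring

/-- Per-round regret bound from the proof of Theorem 1: if the confidence
bounds hold (`‖θ^a − θ̂^a‖_{V^a} ≤ √β` for all arms) and the played arm `b` is
not excluded by the per-arm confidence intervals, then for every arm `a` the
instantaneous regret of playing `b` is at most
`2√β (‖s‖_{(V^a)⁻¹} + ‖s‖_{(V^b)⁻¹}) ≤ 4√β · max_c ‖s‖_{(V^c)⁻¹}`.
Here `‖x‖_V = √(xᵀ V x)`. -/
theorem nonexcluded_arm_instantaneous_regret_bound
    (d k : ℕ) (hd : 1 ≤ d) (hk : 1 ≤ k)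
    (V : Fin k → Matrix (Fin d) (Fin d) ℝ)
    (hV : ∀ a : Fin k, (V a).PosDef)
    (θ θhat : Fin k → Fin d → ℝ)
    (β : ℝ) (hβ : 0 ≤ β)
    (hconf : ∀ a : Fin k,
      Real.sqrt ((θ a - θhat a) ⬝ᵥ (V a).mulVec (θ a - θhat a)) ≤ Real.sqrt β)
    (s : Fin d → ℝ) (b : Fin k)
    (hnotexcl : ∀ i : Fin k,
      s ⬝ᵥ θhat i - Real.sqrt β * Real.sqrt (s ⬝ᵥ ((V i)⁻¹).mulVec s) ≤
        s ⬝ᵥ θhat b + Real.sqrt β * Real.sqrt (s ⬝ᵥ ((V b)⁻¹).mulVec s)) :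
    ∀ a : Fin k,
      s ⬝ᵥ θ a - s ⬝ᵥ θ b ≤
          2 * Real.sqrt β *
            (Real.sqrt (s ⬝ᵥ ((V a)⁻¹).mulVec s) +
              Real.sqrt (s ⬝ᵥ ((V b)⁻¹).mulVec s)) ∧
        2 * Real.sqrt β *
            (Real.sqrt (s ⬝ᵥ ((V a)⁻¹).mulVec s) +
              Real.sqrt (s ⬝ᵥ ((V b)⁻¹).mulVec s)) ≤
          4 * Real.sqrt β *
            (Finset.univ.sup' (Finset.univ_nonempty_iff.mpr ⟨⟨0, hk⟩⟩)
              (fun c : Fin k => Real.sqrt (s ⬝ᵥ ((V c)⁻¹).mulVec s))) :=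
  nonexcluded_arm_instantaneous_regret_bound_general d k hk V hV θ θhat β hconf s b hnotexcl
end
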